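/- arXiv:2404.03409 — 6 statements merged into one kernel-verified Lean document; each statement's English description precedes it below -/
import Mathlib

section
/- Let a, b, ω > 0 and σ = −a²b. If φ = (x, y) : [0, ∞) → ℝ² is a solution of the bistable oscillator with x(0)² + y(0)² < a, then x(t)² + y(t)² < a for all t ≥ 0 and x(t)² + y(t)² → 0 as t → ∞ (the origin attracts the open disk of squared radius a). -/
/-!
The squared radius `r = x² + y²` obeys the scalar equation `ṙ = 2 r g(r) = -2b r (r - a)²`,
the rotation contributing nothing. Hence `r` is nonincreasing, so `r t ≤ r 0 < a`; then
`(r - a)² ≥ (a - r 0)²` gives `ṙ ≤ -c r` with `c = 2b (a - r 0)² > 0`, and `r` decays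
exponentially.
-/

open Real Set Filter Topology

theorem antitoneOn_Ici_of_hasDerivAt_nonpos {f f' : ℝ → ℝ} {t₀ : ℝ}
    (hf : ∀ t ≥ t₀, HasDerivAt f (f' t) t) (hf' : ∀ t ≥ t₀, f' t ≤ 0) :
    AntitoneOn f (Ici t₀) := by
  refine antitoneOn_of_hasDerivWithinAt_nonpos (f' := f') (convex_Ici t₀)
    (fun t ht => (hf t ht).continuousAt.continuousWithinAt) (fun t ht => ?_) (fun t ht => ?_)
  all_goals rw [interior_Ici] at ht
  exacts [(hf t (le_of_lt ht)).hasDerivWithinAt, hf' t (le_of_lt ht)]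

theorem le_mul_exp_neg_of_hasDerivAt_le_neg_mul {f f' : ℝ → ℝ} {c : ℝ}
    (hf : ∀ t ≥ 0, HasDerivAt f (f' t) t) (hf' : ∀ t ≥ 0, f' t ≤ -c * f t)
    {t : ℝ} (ht : 0 ≤ t) : f t ≤ f 0 * exp (-(c * t)) := by
  have hanti : AntitoneOn (fun s => f s * exp (c * s)) (Ici 0) := by
    refine antitoneOn_Ici_of_hasDerivAt_nonpos
      (fun s hs => (hf s hs).mul (hasDerivAt_const_mul c).exp) fun s hs => ?_
    nlinarith [hf' s hs, exp_pos (c * s)]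
  have h := hanti self_mem_Ici ht ht
  simp only [mul_zero, exp_zero, mul_one] at h
  rwa [exp_neg, ← div_eq_mul_inv, le_div_iff₀ (exp_pos _)]

theorem hasDerivAt_sq_add_sq_of_rotation {x y : ℝ → ℝ} {ω g t : ℝ}
    (hx : HasDerivAt x (-ω * y t + x t * g) t) (hy : HasDerivAt y (ω * x t + y t * g) t) :
    HasDerivAt (fun s => x s ^ 2 + y s ^ 2) (2 * (x t ^ 2 + y t ^ 2) * g) t := by
  refine ((hx.fun_pow 2).fun_add (hy.fun_pow 2)).congr_deriv ?_
  push_cast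
  ring

theorem lt_and_tendsto_zero_of_hasDerivAt_neg_mul_sub_sq {r : ℝ → ℝ} {a b : ℝ} (hb : 0 < b)
    (hr_nonneg : ∀ t ≥ 0, 0 ≤ r t) (hr : ∀ t ≥ 0, HasDerivAt r (-2 * b * r t * (r t - a) ^ 2) t)
    (h0 : r 0 < a) : (∀ t ≥ 0, r t < a) ∧ Tendsto r atTop (𝓝 0) := by
  have hle : ∀ t ≥ 0, r t ≤ r 0 := by
    have hanti := antitoneOn_Ici_of_hasDerivAt_nonpos hr fun t ht => by
      nlinarith [mul_nonneg (hr_nonneg t ht) (sq_nonneg (r t - a))]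
    exact fun t ht => hanti self_mem_Ici ht ht
  refine ⟨fun t ht => (hle t ht).trans_lt h0, ?_⟩
  set c := 2 * b * (a - r 0) ^ 2
  have hc : 0 < c := by have := sub_pos.mpr h0; positivity
  have hdecay : ∀ t ≥ 0, -2 * b * r t * (r t - a) ^ 2 ≤ -c * r t := fun t ht => by
    have hsq : (a - r 0) ^ 2 ≤ (r t - a) ^ 2 := by
      nlinarith [hle t ht, hr_nonneg t ht]
    nlinarith [mul_le_mul_of_nonneg_left hsq (mul_nonneg hb.le (hr_nonneg t ht))]
  have hexp : Tendsto (fun t => r 0 * exp (-(c * t))) atTop (𝓝 0) := by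
    simpa using (tendsto_exp_neg_atTop_nhds_zero.comp
      (tendsto_id.const_mul_atTop hc)).const_mul (r 0)
  refine tendsto_of_tendsto_of_tendsto_of_le_of_le' tendsto_const_nhds hexp ?_ ?_ <;>
    filter_upwards [eventually_ge_atTop 0] with t ht
  exacts [hr_nonneg t ht, le_mul_exp_neg_of_hasDerivAt_le_neg_mul hr hdecay ht]

theorem stmt_2_general (a b ω σ : ℝ) (hb : 0 < b)
    (hσ : σ = -a ^ 2 * b)
    (x y : ℝ → ℝ)
    (hx : ∀ t ≥ (0 : ℝ), HasDerivAt x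
      (-ω * y t + x t * (σ + 2 * a * b * (x t ^ 2 + y t ^ 2) - b * (x t ^ 2 + y t ^ 2) ^ 2)) t)
    (hy : ∀ t ≥ (0 : ℝ), HasDerivAt y
      (ω * x t + y t * (σ + 2 * a * b * (x t ^ 2 + y t ^ 2) - b * (x t ^ 2 + y t ^ 2) ^ 2)) t)
    (h0 : x 0 ^ 2 + y 0 ^ 2 < a) :
    (∀ t ≥ (0 : ℝ), x t ^ 2 + y t ^ 2 < a) ∧
    Filter.Tendsto (fun t => x t ^ 2 + y t ^ 2) Filter.atTop (nhds 0) := by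
  refine lt_and_tendsto_zero_of_hasDerivAt_neg_mul_sub_sq hb (fun t _ => by positivity)
    (fun t ht => ?_) h0
  convert hasDerivAt_sq_add_sq_of_rotation (hx t ht) (hy t ht) using 1
  rw [hσ]
  ring

/-- for σ = -a²b the origin attracts the open disk of squared radius a. -/
theorem stmt_2 (a b ω σ : ℝ) (ha : 0 < a) (hb : 0 < b) (hω : 0 < ω)
    (hσ : σ = -a ^ 2 * b)
    (x y : ℝ → ℝ)
    (hx : ∀ t ≥ (0 : ℝ), HasDerivAt x
      (-ω * y t + x t * (σ + 2 * a * b * (x t ^ 2 + y t ^ 2) - b * (x t ^ 2 + y t ^ 2) ^ 2)) t)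
    (hy : ∀ t ≥ (0 : ℝ), HasDerivAt y
      (ω * x t + y t * (σ + 2 * a * b * (x t ^ 2 + y t ^ 2) - b * (x t ^ 2 + y t ^ 2) ^ 2)) t)
    (h0 : x 0 ^ 2 + y 0 ^ 2 < a) :
    (∀ t ≥ (0 : ℝ), x t ^ 2 + y t ^ 2 < a) ∧
    Filter.Tendsto (fun t => x t ^ 2 + y t ^ 2) Filter.atTop (nhds 0) :=
  stmt_2_general a b ω σ hb hσ x y hx hy h0
end

section
/- Let a, b, ω > 0 and −a²b < σ < 0, and set γ₀ = √(a² + σ/b). If φ = (x, y) : [0, ∞) → ℝ² is a solution of the bistable oscillator with x(0)² + y(0)² > a − γ₀, then x(t)² + y(t)² → a + γ₀ as t → ∞; equivalently, the distance from φ(t) to the circle 𝒞₁ = {(x,y) : x² + y² = a + γ₀} tends to 0. That is, the set 𝒜ₗ = {(x,y) : x² + y² > a − γ₀} is contained in the region of attraction of the limit cycle 𝒞₁. -/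
/-!
For `r = x² + y²` the system gives `r' = 2 r g(r) = -2b r (r - (a - γ₀)) (r - (a + γ₀))`. For either
root `ρ` this is a linear equation `(r - ρ)' = k(t) (r - ρ)` with continuous `k`, so
`r(t) - ρ = (r(0) - ρ) exp ∫₀ᵗ k` and `r - ρ` keeps its sign. Hence `r` stays above `a - γ₀` and on
its initial side of `a + γ₀`; below `a + γ₀` the coefficient for `ρ = a - γ₀` is nonnegative, so `r`
stays above `m = min (r 0) (a + γ₀) > a - γ₀`. The coefficient for `ρ = a + γ₀` is then at most
`-2b m (m - (a - γ₀)) < 0`, so `r(t) - (a + γ₀)` decays exponentially.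
-/

open Real Set Filter Topology

theorem eq_mul_exp_integral_of_hasDerivAt_mul {w k : ℝ → ℝ} (hk : ContinuousOn k (Ici 0))
    (hw : ∀ t ≥ 0, HasDerivAt w (k t * w t) t) {t : ℝ} (ht : 0 ≤ t) :
    w t = w 0 * exp (∫ s in (0)..t, k s) := by
  set K : ℝ → ℝ := fun t => ∫ s in (0)..t, k s
  have hkt : ContinuousOn k (Icc 0 t) := hk.mono Icc_subset_Ici_self
  have hK : ∀ s ≥ 0, HasDerivWithinAt K (k s) (Ici s) s := fun s hs =>
    intervalIntegral.integral_hasDerivWithinAt_right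
      ((hk.mono Icc_subset_Ici_self).intervalIntegrable_of_Icc hs)
      ((hk.stronglyMeasurableAtFilter_nhdsWithin measurableSet_Ici s).filter_mono
        (nhdsWithin_mono _ fun r hr => hs.trans hr.le))
      ((hk s hs).mono fun r hr => hs.trans hr.le)
  have hE : ∀ s ∈ Ico 0 t, HasDerivWithinAt (fun s => w s * exp (-K s)) 0 (Ici s) s :=
    fun s hs => ((hw s hs.1).hasDerivWithinAt.mul (hK s hs.1).neg.exp).congr_deriv (by ring)
  have hEcont : ContinuousOn (fun s => w s * exp (-K s)) (Icc 0 t) := by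
    have hKcont : ContinuousOn K (Icc 0 t) := by
      have := intervalIntegral.continuousOn_primitive_interval (μ := MeasureTheory.volume)
        (hkt.integrableOn_Icc.mono_set (uIcc_of_le ht).subset)
      rwa [uIcc_of_le ht] at this
    exact (continuousOn_of_forall_continuousAt fun s hs => (hw s hs.1).continuousAt).mul
      hKcont.neg.rexp
  have := constant_of_has_deriv_right_zero hEcont hE t ⟨ht, le_rfl⟩
  simp only [K, intervalIntegral.integral_same, neg_zero, exp_zero, mul_one] at this
  rw [← this, mul_assoc, ← exp_add, neg_add_cancel, exp_zero, mul_one]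

theorem tendsto_zero_of_hasDerivAt_mul {w k : ℝ → ℝ} {c : ℝ} (hk : ContinuousOn k (Ici 0))
    (hw : ∀ t ≥ 0, HasDerivAt w (k t * w t) t) (hc : 0 < c) (hkc : ∀ t ≥ 0, k t ≤ -c) :
    Tendsto w atTop (𝓝 0) := by
  have hbound : ∀ t ≥ 0, ‖w t‖ ≤ |w 0| * exp (-(c * t)) := by
    intro t ht
    rw [eq_mul_exp_integral_of_hasDerivAt_mul hk hw ht, Real.norm_eq_abs, abs_mul, abs_exp]
    gcongr
    calc ∫ s in (0)..t, k s ≤ ∫ _ in (0)..t, -c :=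
          intervalIntegral.integral_mono_on ht
            ((hk.mono Icc_subset_Ici_self).intervalIntegrable_of_Icc ht)
            intervalIntegrable_const fun s hs => hkc s hs.1
      _ = -(c * t) := by simp [mul_comm]
  have hdecay : Tendsto (fun t => |w 0| * exp (-(c * t))) atTop (𝓝 0) := by
    simpa using (tendsto_exp_neg_atTop_nhds_zero.comp (tendsto_id.const_mul_atTop hc)).const_mul
      |w 0|
  exact squeeze_zero_norm' ((eventually_ge_atTop 0).mono hbound) hdecay

section CubicODE

variable {u : ℝ → ℝ} {b α β : ℝ}

theorem sub_eq_mul_exp_of_cubicODE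
    (hu : ∀ t ≥ 0, HasDerivAt u (-b * u t * (u t - α) * (u t - β)) t) {t : ℝ} (ht : 0 ≤ t) :
    u t - β = (u 0 - β) * exp (∫ s in (0)..t, -b * u s * (u s - α)) := by
  have hcont : ContinuousOn u (Ici 0) := fun t ht => (hu t ht).continuousAt.continuousWithinAt
  exact eq_mul_exp_integral_of_hasDerivAt_mul (w := fun t => u t - β) (by fun_prop)
    (fun t ht => (hu t ht).sub_const β) ht

theorem lt_of_cubicODE (hu : ∀ t ≥ 0, HasDerivAt u (-b * u t * (u t - α) * (u t - β)) t)
    (h0 : β < u 0) {t : ℝ} (ht : 0 ≤ t) : β < u t := by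
  have := sub_eq_mul_exp_of_cubicODE hu ht
  nlinarith [exp_pos (∫ s in (0)..t, -b * u s * (u s - α))]

theorem le_of_cubicODE (hu : ∀ t ≥ 0, HasDerivAt u (-b * u t * (u t - α) * (u t - β)) t)
    (h0 : u 0 ≤ β) {t : ℝ} (ht : 0 ≤ t) : u t ≤ β := by
  have := sub_eq_mul_exp_of_cubicODE hu ht
  nlinarith [exp_pos (∫ s in (0)..t, -b * u s * (u s - α))]

theorem min_le_of_cubicODE (hb : 0 ≤ b) (hα : 0 ≤ α)
    (hu : ∀ t ≥ 0, HasDerivAt u (-b * u t * (u t - α) * (u t - β)) t)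
    (h0 : α < u 0) {t : ℝ} (ht : 0 ≤ t) : min (u 0) β ≤ u t := by
  have hu' : ∀ t ≥ 0, HasDerivAt u (-b * u t * (u t - β) * (u t - α)) t :=
    fun t ht => (hu t ht).congr_deriv (by ring)
  rcases le_or_gt (u 0) β with hle | hgt
  · have hbetween : ∀ s ≥ 0, α < u s ∧ u s ≤ β := fun s hs =>
      ⟨lt_of_cubicODE hu' h0 hs, le_of_cubicODE hu hle hs⟩
    have hint : 0 ≤ ∫ s in (0)..t, -b * u s * (u s - β) :=
      intervalIntegral.integral_nonneg ht fun s hs => by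
        obtain ⟨hαs, hsβ⟩ := hbetween s hs.1
        have : 0 ≤ u s * (β - u s) := mul_nonneg (by linarith) (by linarith)
        nlinarith
    have := sub_eq_mul_exp_of_cubicODE hu' ht
    refine min_le_of_left_le (sub_le_sub_iff_right α |>.1 ?_)
    rw [this]
    exact le_mul_of_one_le_right (by linarith) (one_le_exp hint)
  · exact min_le_of_right_le (lt_of_cubicODE hu hgt ht).le

theorem tendsto_of_cubicODE (hb : 0 < b) (hα : 0 ≤ α) (hαβ : α < β)
    (hu : ∀ t ≥ 0, HasDerivAt u (-b * u t * (u t - α) * (u t - β)) t)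
    (h0 : α < u 0) : Tendsto u atTop (𝓝 β) := by
  set m := min (u 0) β
  have hm : α < m := lt_min h0 hαβ
  have hcont : ContinuousOn u (Ici 0) := fun t ht => (hu t ht).continuousAt.continuousWithinAt
  have hrate : ∀ t ≥ 0, -b * u t * (u t - α) ≤ -(b * (m * (m - α))) := fun t ht => by
    have hmu := min_le_of_cubicODE hb.le hα hu h0 ht
    have : m * (m - α) ≤ u t * (u t - α) :=
      mul_le_mul hmu (by linarith) (by linarith) (by linarith)
    nlinarith
  have := tendsto_zero_of_hasDerivAt_mul (w := fun t => u t - β) (by fun_prop)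
    (fun t ht => (hu t ht).sub_const β) (mul_pos hb (mul_pos (by linarith) (by linarith))) hrate
  exact tendsto_sub_nhds_zero_iff.1 this

end CubicODE

theorem stmt_6_general (a b ω σ : ℝ) (ha : 0 < a) (hb : 0 < b)
    (hσ1 : -a ^ 2 * b < σ) (hσ2 : σ < 0)
    (x y : ℝ → ℝ)
    (hx : ∀ t ≥ (0 : ℝ), HasDerivAt x
      (-ω * y t + x t * (σ + 2 * a * b * (x t ^ 2 + y t ^ 2) - b * (x t ^ 2 + y t ^ 2) ^ 2)) t)
    (hy : ∀ t ≥ (0 : ℝ), HasDerivAt y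
      (ω * x t + y t * (σ + 2 * a * b * (x t ^ 2 + y t ^ 2) - b * (x t ^ 2 + y t ^ 2) ^ 2)) t)
    (h0 : a - Real.sqrt (a ^ 2 + σ / b) < x 0 ^ 2 + y 0 ^ 2) :
    Filter.Tendsto (fun t => x t ^ 2 + y t ^ 2) Filter.atTop
      (nhds (a + Real.sqrt (a ^ 2 + σ / b))) := by
  set γ := √(a ^ 2 + σ / b)
  have hdisc : 0 < a ^ 2 + σ / b := by linarith [(lt_div_iff₀ hb).2 hσ1]
  have hγ : 0 < γ := sqrt_pos.2 hdisc
  have hγa : γ < a := (sqrt_lt' ha).2 (by linarith [div_neg_of_neg_of_pos hσ2 hb])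
  have hbγ : b * γ ^ 2 = b * a ^ 2 + σ := by
    rw [sq_sqrt hdisc.le]
    field_simp
  have hu : ∀ t ≥ 0, HasDerivAt (fun t => x t ^ 2 + y t ^ 2) (-(2 * b) * (x t ^ 2 + y t ^ 2) *
      (x t ^ 2 + y t ^ 2 - (a - γ)) * (x t ^ 2 + y t ^ 2 - (a + γ))) t := fun t ht =>
    (((hx t ht).pow 2).add ((hy t ht).pow 2)).congr_deriv <| by
      linear_combination (-2 * (x t ^ 2 + y t ^ 2)) * hbγ
  exact tendsto_of_cubicODE (by positivity) (by linarith) (by linarith) hu h0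

/-- every trajectory starting with x²+y² > a - γ₀ converges to the
limit cycle x²+y² = a + γ₀. -/
theorem stmt_6 (a b ω σ : ℝ) (ha : 0 < a) (hb : 0 < b) (hω : 0 < ω)
    (hσ1 : -a ^ 2 * b < σ) (hσ2 : σ < 0)
    (x y : ℝ → ℝ)
    (hx : ∀ t ≥ (0 : ℝ), HasDerivAt x
      (-ω * y t + x t * (σ + 2 * a * b * (x t ^ 2 + y t ^ 2) - b * (x t ^ 2 + y t ^ 2) ^ 2)) t)
    (hy : ∀ t ≥ (0 : ℝ), HasDerivAt y
      (ω * x t + y t * (σ + 2 * a * b * (x t ^ 2 + y t ^ 2) - b * (x t ^ 2 + y t ^ 2) ^ 2)) t)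
    (h0 : a - Real.sqrt (a ^ 2 + σ / b) < x 0 ^ 2 + y 0 ^ 2) :
    Filter.Tendsto (fun t => x t ^ 2 + y t ^ 2) Filter.atTop
      (nhds (a + Real.sqrt (a ^ 2 + σ / b))) :=
  stmt_6_general a b ω σ ha hb hσ1 hσ2 x y hx hy h0
end

section
/- Let a, b, ω > 0 and σ ≥ 0, and set γ₀ = √(a² + σ/b). If φ = (x, y) : [0, ∞) → ℝ² is a solution of the bistable oscillator with (x(0), y(0)) ≠ (0, 0), then x(t)² + y(t)² → a + γ₀ as t → ∞; i.e., the origin is unstable and every nonzero trajectory converges to the limit cycle 𝒞₁ = {(x,y) : x² + y² = a + γ₀}. -/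
/-!
The squared radius `u = x² + y²` solves the scalar equation `u' = 2 u g(u)`, the rotation terms
cancelling, and `g(u) = -b (u - (a - γ₀)) (u - (a + γ₀))` with `a - γ₀ ≤ 0`. So `u' > 0` at the level
`m = min (u 0) ((a + γ₀) / 2) > 0`, which `u` therefore never crosses downwards; above it,
`V = (u - (a + γ₀))²` satisfies `V' ≤ -4 b m² V` and decays exponentially by Grönwall's inequality.
-/

open Filter Real Topology

theorem le_of_hasDerivAt_of_deriv_pos_of_eq {u u' : ℝ → ℝ} {m : ℝ}
    (hu : ∀ t ≥ (0 : ℝ), HasDerivAt u (u' t) t) (hm : m ≤ u 0)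
    (hpos : ∀ t ≥ (0 : ℝ), u t = m → 0 < u' t) {t : ℝ} (ht : 0 ≤ t) : m ≤ u t := by
  have key := image_le_of_deriv_right_lt_deriv_boundary (f := fun s => -u s) (a := 0) (b := t)
    (B := fun _ => -m) (B' := fun _ => 0)
    (fun s hs => (hu s hs.1).continuousAt.neg.continuousWithinAt)
    (fun s hs => (hu s hs.1).neg.hasDerivWithinAt) (neg_le_neg hm)
    (fun _ => hasDerivAt_const _ _)
    (fun s hs heq => neg_neg_of_pos (hpos s hs.1 (neg_inj.1 heq)))
  exact neg_le_neg_iff.1 (key ⟨ht, le_rfl⟩)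

theorem tendsto_zero_of_hasDerivAt_le_neg_mul {V V' : ℝ → ℝ} {c : ℝ} (hc : 0 < c)
    (hV : ∀ t ≥ (0 : ℝ), HasDerivAt V (V' t) t) (hV_nonneg : ∀ t ≥ (0 : ℝ), 0 ≤ V t)
    (hV' : ∀ t ≥ (0 : ℝ), V' t ≤ -c * V t) : Tendsto V atTop (𝓝 0) := by
  have hbound : ∀ t ≥ (0 : ℝ), V t ≤ V 0 * exp (-c * t) := fun t ht => by
    simpa [gronwallBound_ε0] using le_gronwallBound_of_liminf_deriv_right_le (K := -c) (ε := 0)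
      (fun s hs => (hV s hs.1).continuousAt.continuousWithinAt)
      (fun s hs _ hr => (hV s hs.1).hasDerivWithinAt.liminf_right_slope_le hr) le_rfl
      (fun s hs => by simpa using hV' s hs.1) t ⟨ht, le_rfl⟩
  have hexp : Tendsto (fun t => V 0 * exp (-c * t)) atTop (𝓝 0) := by
    simpa using (tendsto_exp_atBot.comp
      (tendsto_id.const_mul_atTop_of_neg (neg_neg_of_pos hc))).const_mul (V 0)
  exact tendsto_of_tendsto_of_tendsto_of_le_of_le' tendsto_const_nhds hexp
    (eventually_atTop.2 ⟨0, hV_nonneg⟩) (eventually_atTop.2 ⟨0, hbound⟩)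

theorem tendsto_of_tendsto_sub_sq_zero {α : Type*} {l : Filter α} {f : α → ℝ} {L : ℝ}
    (h : Tendsto (fun t => (f t - L) ^ 2) l (𝓝 0)) : Tendsto f l (𝓝 L) := by
  have := ((continuous_sqrt.tendsto 0).comp h)
  simp only [Function.comp_def, sqrt_sq_eq_abs, sqrt_zero] at this
  exact tendsto_sub_nhds_zero_iff.1 ((tendsto_zero_iff_abs_tendsto_zero _).2 this)

section Bistable

variable {a b σ : ℝ}

theorem bistable_rate_eq (hb : 0 < b) (hσ : 0 ≤ σ) (s : ℝ) :
    σ + 2 * a * b * s - b * s ^ 2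
      = -b * (s - (a - √(a ^ 2 + σ / b))) * (s - (a + √(a ^ 2 + σ / b))) := by
  have h : b * √(a ^ 2 + σ / b) ^ 2 = a ^ 2 * b + σ := by
    rw [sq_sqrt (by positivity)]
    field_simp
  linear_combination -h

theorem sub_sqrt_sq_add_nonpos (hb : 0 ≤ b) (hσ : 0 ≤ σ) : a - √(a ^ 2 + σ / b) ≤ 0 :=
  sub_nonpos.2 <| (le_abs_self a).trans <| (sqrt_sq_eq_abs a).symm.le.trans <|
    sqrt_le_sqrt (le_add_of_nonneg_right (by positivity))

theorem tendsto_of_hasDerivAt_bistable_radius (ha : 0 < a) (hb : 0 < b) (hσ : 0 ≤ σ)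
    {u : ℝ → ℝ} (hu : ∀ t ≥ (0 : ℝ),
      HasDerivAt u (2 * u t * (σ + 2 * a * b * u t - b * u t ^ 2)) t) (hu0 : 0 < u 0) :
    Tendsto u atTop (𝓝 (a + √(a ^ 2 + σ / b))) := by
  have hγ := sub_sqrt_sq_add_nonpos hb.le hσ (a := a)
  simp only [bistable_rate_eq hb hσ] at hu
  set γ := √(a ^ 2 + σ / b)
  set m := min (u 0) ((a + γ) / 2)
  have hm : 0 < m := lt_min hu0 (by linarith)
  have hmL : m < a + γ := (min_le_right _ _).trans_lt (by linarith)
  have hlow : ∀ t ≥ (0 : ℝ), m ≤ u t := fun t ht =>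
    le_of_hasDerivAt_of_deriv_pos_of_eq hu (min_le_left _ _) (fun s _ hs => by
      rw [hs]
      nlinarith [mul_pos (mul_pos (mul_pos hm hb) (by linarith : 0 < m - (a - γ)))
        (sub_pos.2 hmL)]) ht
  refine tendsto_of_tendsto_sub_sq_zero <|
    tendsto_zero_of_hasDerivAt_le_neg_mul (c := 4 * b * m ^ 2) (by positivity)
      (fun t ht => ((hu t ht).sub_const (a + γ)).pow 2) (fun t _ => sq_nonneg _) fun t ht => ?_
  have hkey : m ^ 2 ≤ u t * (u t - (a - γ)) := by nlinarith [hlow t ht]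
  simp only [Nat.cast_ofNat, Nat.add_one_sub_one, pow_one]
  nlinarith [mul_le_mul_of_nonneg_left hkey (mul_nonneg hb.le (sq_nonneg (u t - (a + γ))))]

end Bistable

theorem stmt_8_general (a b ω σ : ℝ) (ha : 0 < a) (hb : 0 < b)
    (hσ : 0 ≤ σ)
    (x y : ℝ → ℝ)
    (hx : ∀ t ≥ (0 : ℝ), HasDerivAt x
      (-ω * y t + x t * (σ + 2 * a * b * (x t ^ 2 + y t ^ 2) - b * (x t ^ 2 + y t ^ 2) ^ 2)) t)
    (hy : ∀ t ≥ (0 : ℝ), HasDerivAt y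
      (ω * x t + y t * (σ + 2 * a * b * (x t ^ 2 + y t ^ 2) - b * (x t ^ 2 + y t ^ 2) ^ 2)) t)
    (h0 : (x 0, y 0) ≠ ((0 : ℝ), (0 : ℝ))) :
    Filter.Tendsto (fun t => x t ^ 2 + y t ^ 2) Filter.atTop
      (nhds (a + Real.sqrt (a ^ 2 + σ / b))) := by
  refine tendsto_of_hasDerivAt_bistable_radius ha hb hσ
    (fun t ht => (((hx t ht).pow 2).add ((hy t ht).pow 2)).congr_deriv (by ring)) ?_
  have hne : x 0 ≠ 0 ∨ y 0 ≠ 0 := by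
    contrapose! h0
    rw [h0.1, h0.2]
  rcases hne with h | h <;> positivity

/-- for σ ≥ 0 every nonzero trajectory converges to the limit cycle
x²+y² = a + γ₀. -/
theorem stmt_8 (a b ω σ : ℝ) (ha : 0 < a) (hb : 0 < b) (hω : 0 < ω)
    (hσ : 0 ≤ σ)
    (x y : ℝ → ℝ)
    (hx : ∀ t ≥ (0 : ℝ), HasDerivAt x
      (-ω * y t + x t * (σ + 2 * a * b * (x t ^ 2 + y t ^ 2) - b * (x t ^ 2 + y t ^ 2) ^ 2)) t)
    (hy : ∀ t ≥ (0 : ℝ), HasDerivAt y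
      (ω * x t + y t * (σ + 2 * a * b * (x t ^ 2 + y t ^ 2) - b * (x t ^ 2 + y t ^ 2) ^ 2)) t)
    (h0 : (x 0, y 0) ≠ ((0 : ℝ), (0 : ℝ))) :
    Filter.Tendsto (fun t => x t ^ 2 + y t ^ 2) Filter.atTop
      (nhds (a + Real.sqrt (a ^ 2 + σ / b))) :=
  stmt_8_general a b ω σ ha hb hσ x y hx hy h0
end

section
/- Let a, b, ω > 0, −a²b < σ < 0, μ ∈ (0, 1), and ε ∈ (0, 1), and set γ_μ = √(a² + (1−μ)σ/b) and g(s) = σ + 2ab·s − b·s². Fix (x, y) ∈ ℝ² and (u₁, u₂) ∈ ℝ² such that x² + y² < a − γ_μ and √(x² + y²) ≥ ‖(u₁,u₂)‖ / ((1−ε)μ|σ|). Then the derivative of V = ½(x² + y²) along the forced vector field, namely W := (x² + y²)·g(x² + y²) + x·u₁ + y·u₂, satisfies W ≤ ε·μ·σ·(x² + y²) ≤ 0, with W = 0 only if x² + y² = 0. -/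
/-!
Write `s = x² + y²`. Below the smaller root `a - γ_μ` of `g(s) = μσ` the gain satisfies `g(s) ≤ μσ`,
so the unforced part of the Lyapunov derivative is at most `μσ·s`. By Cauchy–Schwarz the forcing
contributes at most `‖u‖·√s ≤ (1-ε)μ|σ|·s`, which leaves the margin `εμσ·s`.
-/

open Real

lemma mul_add_mul_le_sqrt_mul_sqrt (x y u v : ℝ) :
    x * u + y * v ≤ √(x ^ 2 + y ^ 2) * √(u ^ 2 + v ^ 2) := by
  simpa [Fin.sum_univ_two] using
    Real.sum_mul_le_sqrt_mul_sqrt Finset.univ ![x, y] ![u, v]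

lemma mul_add_mul_le_of_sqrt_div_le {x y u v k : ℝ} (hk : 0 < k)
    (h : √(u ^ 2 + v ^ 2) / k ≤ √(x ^ 2 + y ^ 2)) :
    x * u + y * v ≤ k * (x ^ 2 + y ^ 2) := by
  rw [div_le_iff₀ hk] at h
  calc x * u + y * v ≤ √(x ^ 2 + y ^ 2) * √(u ^ 2 + v ^ 2) :=
        mul_add_mul_le_sqrt_mul_sqrt x y u v
    _ ≤ √(x ^ 2 + y ^ 2) * (√(x ^ 2 + y ^ 2) * k) := by gcongr
    _ = k * (x ^ 2 + y ^ 2) := by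
        rw [← mul_assoc, mul_self_sqrt (by positivity), mul_comm]

lemma two_mul_mul_sub_sq_le {a b c s : ℝ} (hb : 0 < b) (hc : 0 ≤ a ^ 2 + c / b)
    (hs : s < a - √(a ^ 2 + c / b)) :
    2 * a * b * s - b * s ^ 2 ≤ -c := by
  have hroot : √(a ^ 2 + c / b) ^ 2 ≤ (a - s) ^ 2 := by
    gcongr
    linarith
  rw [sq_sqrt hc] at hroot
  have hbc : b * (a ^ 2 + c / b) = b * a ^ 2 + c := by field_simp
  nlinarith

theorem stmt_11_general (a b σ μ ε : ℝ) (hb : 0 < b)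
    (hσ1 : -a ^ 2 * b < σ) (hσ2 : σ < 0)
    (hμ : μ ∈ Set.Ioo (0 : ℝ) 1) (hε : ε ∈ Set.Ioo (0 : ℝ) 1)
    (x y u1 u2 : ℝ)
    (hxy : x ^ 2 + y ^ 2 < a - Real.sqrt (a ^ 2 + (1 - μ) * σ / b))
    (hlow : Real.sqrt (u1 ^ 2 + u2 ^ 2) / ((1 - ε) * μ * |σ|) ≤ Real.sqrt (x ^ 2 + y ^ 2)) :
    (x ^ 2 + y ^ 2) * (σ + 2 * a * b * (x ^ 2 + y ^ 2) - b * (x ^ 2 + y ^ 2) ^ 2)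
        + x * u1 + y * u2 ≤ ε * μ * σ * (x ^ 2 + y ^ 2) ∧
    ε * μ * σ * (x ^ 2 + y ^ 2) ≤ 0 ∧
    ((x ^ 2 + y ^ 2) * (σ + 2 * a * b * (x ^ 2 + y ^ 2) - b * (x ^ 2 + y ^ 2) ^ 2)
        + x * u1 + y * u2 = 0 → x ^ 2 + y ^ 2 = 0) := by
  obtain ⟨hμ0, -⟩ := hμ
  obtain ⟨hε0, hε1⟩ := hε
  rw [abs_of_neg hσ2] at hlow
  have hforce := mul_add_mul_le_of_sqrt_div_le
    (mul_pos (mul_pos (sub_pos.2 hε1) hμ0) (neg_pos.2 hσ2)) hlow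
  have hgain : σ + 2 * a * b * (x ^ 2 + y ^ 2) - b * (x ^ 2 + y ^ 2) ^ 2 ≤ μ * σ := by
    have hc : 0 ≤ a ^ 2 + (1 - μ) * σ / b := by
      have h : 0 ≤ (a ^ 2 * b + (1 - μ) * σ) / b := div_nonneg (by nlinarith) hb.le
      rwa [add_div, mul_div_cancel_right₀ _ hb.ne'] at h
    linarith [two_mul_mul_sub_sq_le hb hc hxy]
  have hmargin : ε * μ * σ < 0 :=
    mul_neg_of_pos_of_neg (mul_pos hε0 hμ0) hσ2
  have hr : 0 ≤ x ^ 2 + y ^ 2 := by positivity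
  have hbound : (x ^ 2 + y ^ 2) * (σ + 2 * a * b * (x ^ 2 + y ^ 2) - b * (x ^ 2 + y ^ 2) ^ 2)
      + x * u1 + y * u2 ≤ ε * μ * σ * (x ^ 2 + y ^ 2) := by
    linarith [mul_le_mul_of_nonneg_left hgain hr]
  refine ⟨hbound, mul_nonpos_of_nonpos_of_nonneg hmargin.le hr, fun hzero => ?_⟩
  by_contra hne
  linarith [mul_neg_of_neg_of_pos hmargin (lt_of_le_of_ne hr (Ne.symm hne))]

/-- pointwise bound on the Lyapunov derivative of the forced system. -/
theorem stmt_11 (a b ω σ μ ε : ℝ) (ha : 0 < a) (hb : 0 < b) (hω : 0 < ω)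
    (hσ1 : -a ^ 2 * b < σ) (hσ2 : σ < 0)
    (hμ : μ ∈ Set.Ioo (0 : ℝ) 1) (hε : ε ∈ Set.Ioo (0 : ℝ) 1)
    (x y u1 u2 : ℝ)
    (hxy : x ^ 2 + y ^ 2 < a - Real.sqrt (a ^ 2 + (1 - μ) * σ / b))
    (hlow : Real.sqrt (u1 ^ 2 + u2 ^ 2) / ((1 - ε) * μ * |σ|) ≤ Real.sqrt (x ^ 2 + y ^ 2)) :
    (x ^ 2 + y ^ 2) * (σ + 2 * a * b * (x ^ 2 + y ^ 2) - b * (x ^ 2 + y ^ 2) ^ 2)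
        + x * u1 + y * u2 ≤ ε * μ * σ * (x ^ 2 + y ^ 2) ∧
    ε * μ * σ * (x ^ 2 + y ^ 2) ≤ 0 ∧
    ((x ^ 2 + y ^ 2) * (σ + 2 * a * b * (x ^ 2 + y ^ 2) - b * (x ^ 2 + y ^ 2) ^ 2)
        + x * u1 + y * u2 = 0 → x ^ 2 + y ^ 2 = 0) :=
  stmt_11_general a b σ μ ε hb hσ1 hσ2 hμ hε x y u1 u2 hxy hlow
end

section
/- Let a, b, ω > 0, σ ∈ ℝ, C ∈ ℝ, and n ≥ 2. Let z = (x₁, y₁, …, xₙ, yₙ) : ℝ → ℝ^{2n} be a differentiable solution of the network of bistable oscillators, and write z_k(t) = (x_k(t), y_k(t)) ∈ ℝ². Then the function V(t) = ½ Σ_{k=1}^n ‖z_k(t)‖² satisfies, for all t, V'(t) ≤ Σ_{k=1}^n ‖z_k(t)‖²·g(‖z_k(t)‖²) + |C|·Σ_{k=1}^n ‖z_k(t)‖², where g(s) = σ + 2ab·s − b·s². -/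
/-!
Differentiating `V = ½ ∑ ‖z_k‖²` along the flow, the rotation terms `∓ω` cancel and the
self-interaction contributes `∑ ‖z_k‖² g(‖z_k‖²)`. The coupling contributes `C/n` times
`P = ∑_k ∑_{ℓ ≠ k} ⟨z_k, z_ℓ⟩ = ‖∑_k z_k‖² - ∑_k ‖z_k‖²`; since `‖∑_k z_k‖² ≤ n ∑_k ‖z_k‖²`
by Cauchy–Schwarz, `|P| ≤ n ∑ ‖z_k‖²`, so `C/n · P ≤ |C| ∑ ‖z_k‖²`.
-/

open Finset

section Coupling

variable {ι : Type*} [DecidableEq ι]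

theorem Finset.sum_mul_sum_erase {R : Type*} [CommRing R] (s : Finset ι) (u : ι → R) :
    ∑ k ∈ s, u k * ∑ ℓ ∈ s.erase k, u ℓ = (∑ k ∈ s, u k) ^ 2 - ∑ k ∈ s, u k ^ 2 := by
  rw [sq, sum_mul, ← sum_sub_distrib]
  refine sum_congr rfl fun k hk => ?_
  rw [sum_erase_eq_sub hk]
  ring

theorem Finset.abs_sum_mul_sum_erase_add_le (s : Finset ι) (u v : ι → ℝ) :
    |∑ k ∈ s, u k * ∑ ℓ ∈ s.erase k, u ℓ + ∑ k ∈ s, v k * ∑ ℓ ∈ s.erase k, v ℓ|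
      ≤ #s * ∑ k ∈ s, (u k ^ 2 + v k ^ 2) := by
  rcases s.eq_empty_or_nonempty with rfl | hs
  · simp
  have hcard : (1 : ℝ) ≤ #s := by exact_mod_cast hs.card_pos
  have hu := sq_sum_le_card_mul_sum_sq (s := s) (f := u)
  have hv := sq_sum_le_card_mul_sum_sq (s := s) (f := v)
  have hu₀ : 0 ≤ ∑ k ∈ s, u k ^ 2 := sum_nonneg fun k _ => sq_nonneg (u k)
  have hv₀ : 0 ≤ ∑ k ∈ s, v k ^ 2 := sum_nonneg fun k _ => sq_nonneg (v k)
  rw [sum_mul_sum_erase, sum_mul_sum_erase, sum_add_distrib, abs_le]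
  constructor <;> nlinarith [sq_nonneg (∑ k ∈ s, u k), sq_nonneg (∑ k ∈ s, v k)]

end Coupling

theorem div_natCast_mul_le_abs_mul {C P S : ℝ} {n : ℕ} (hP : |P| ≤ n * S) (hS : 0 ≤ S) :
    C / n * P ≤ |C| * S := by
  rcases n.eq_zero_or_pos with rfl | hn
  · simpa using mul_nonneg (abs_nonneg C) hS
  calc C / n * P ≤ |C / n * P| := le_abs_self _
    _ = |C| / n * |P| := by rw [abs_mul, abs_div, Nat.abs_cast]
    _ ≤ |C| / n * (n * S) := by gcongr
    _ = |C| * S := by field_simp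

theorem hasDerivAt_half_sum_sq_add_sq {ι : Type*} (s : Finset ι) {x y : ι → ℝ → ℝ}
    {x' y' : ι → ℝ} {t : ℝ} (hx : ∀ k ∈ s, HasDerivAt (x k) (x' k) t)
    (hy : ∀ k ∈ s, HasDerivAt (y k) (y' k) t) :
    HasDerivAt (fun r => (1 / 2 : ℝ) * ∑ k ∈ s, (x k r ^ 2 + y k r ^ 2))
      (∑ k ∈ s, (x k t * x' k + y k t * y' k)) t := by
  refine ((HasDerivAt.fun_sum fun k hk => ((hx k hk).pow 2).add ((hy k hk).pow 2)).const_mul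
    (1 / 2 : ℝ)).congr_deriv ?_
  rw [mul_sum]
  exact sum_congr rfl fun k _ => by push_cast; ring

theorem stmt_15_general (a b ω σ C : ℝ)
    (n : ℕ)
    (x y : Fin n → ℝ → ℝ)
    (hx : ∀ k, ∀ t : ℝ, HasDerivAt (x k)
      (-ω * y k t + x k t * (σ + 2 * a * b * (x k t ^ 2 + y k t ^ 2)
        - b * (x k t ^ 2 + y k t ^ 2) ^ 2)
        + (C / n) * ∑ ℓ ∈ Finset.univ.erase k, x ℓ t) t)
    (hy : ∀ k, ∀ t : ℝ, HasDerivAt (y k)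
      (ω * x k t + y k t * (σ + 2 * a * b * (x k t ^ 2 + y k t ^ 2)
        - b * (x k t ^ 2 + y k t ^ 2) ^ 2)
        + (C / n) * ∑ ℓ ∈ Finset.univ.erase k, y ℓ t) t) :
    ∀ t : ℝ, ∃ d : ℝ,
      HasDerivAt (fun s => (1 / 2 : ℝ) * ∑ k, (x k s ^ 2 + y k s ^ 2)) d t ∧
      d ≤ (∑ k, (x k t ^ 2 + y k t ^ 2) * (σ + 2 * a * b * (x k t ^ 2 + y k t ^ 2)
            - b * (x k t ^ 2 + y k t ^ 2) ^ 2))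
          + |C| * ∑ k, (x k t ^ 2 + y k t ^ 2) := by
  intro t
  refine ⟨_, hasDerivAt_half_sum_sq_add_sq univ (fun k _ => hx k t) (fun k _ => hy k t), ?_⟩
  set Q : Fin n → ℝ := fun k => x k t ^ 2 + y k t ^ 2
  set P := ∑ k, x k t * ∑ ℓ ∈ univ.erase k, x ℓ t + ∑ k, y k t * ∑ ℓ ∈ univ.erase k, y ℓ t
  have hsplit : ∑ k, (x k t * (-ω * y k t + x k t * (σ + 2 * a * b * Q k - b * Q k ^ 2)
        + C / n * ∑ ℓ ∈ univ.erase k, x ℓ t) + y k t * (ω * x k t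
        + y k t * (σ + 2 * a * b * Q k - b * Q k ^ 2) + C / n * ∑ ℓ ∈ univ.erase k, y ℓ t))
      = ∑ k, Q k * (σ + 2 * a * b * Q k - b * Q k ^ 2) + C / n * P := by
    rw [mul_add, mul_sum, mul_sum, ← sum_add_distrib, ← sum_add_distrib]
    exact sum_congr rfl fun k _ => by ring
  have hP : |P| ≤ n * ∑ k, Q k := by
    simpa only [card_univ, Fintype.card_fin] using
      abs_sum_mul_sum_erase_add_le univ (fun k => x k t) (fun k => y k t)
  have hQ : 0 ≤ ∑ k, Q k := sum_nonneg fun k _ => by positivity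
  exact hsplit.le.trans (add_le_add_right (div_natCast_mul_le_abs_mul hP hQ) _)

/-- Lyapunov derivative bound for the network of bistable oscillators. -/
theorem stmt_15 (a b ω σ C : ℝ) (ha : 0 < a) (hb : 0 < b) (hω : 0 < ω)
    (n : ℕ) (hn : 2 ≤ n)
    (x y : Fin n → ℝ → ℝ)
    (hx : ∀ k, ∀ t : ℝ, HasDerivAt (x k)
      (-ω * y k t + x k t * (σ + 2 * a * b * (x k t ^ 2 + y k t ^ 2)
        - b * (x k t ^ 2 + y k t ^ 2) ^ 2)
        + (C / n) * ∑ ℓ ∈ Finset.univ.erase k, x ℓ t) t)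
    (hy : ∀ k, ∀ t : ℝ, HasDerivAt (y k)
      (ω * x k t + y k t * (σ + 2 * a * b * (x k t ^ 2 + y k t ^ 2)
        - b * (x k t ^ 2 + y k t ^ 2) ^ 2)
        + (C / n) * ∑ ℓ ∈ Finset.univ.erase k, y ℓ t) t) :
    ∀ t : ℝ, ∃ d : ℝ,
      HasDerivAt (fun s => (1 / 2 : ℝ) * ∑ k, (x k s ^ 2 + y k s ^ 2)) d t ∧
      d ≤ (∑ k, (x k t ^ 2 + y k t ^ 2) * (σ + 2 * a * b * (x k t ^ 2 + y k t ^ 2)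
            - b * (x k t ^ 2 + y k t ^ 2) ^ 2))
          + |C| * ∑ k, (x k t ^ 2 + y k t ^ 2) :=
  stmt_15_general a b ω σ C n x y hx hy
end

section
/- Let ω, σ ∈ ℝ, C ∈ ℝ, and n ≥ 2. Let A ∈ ℂ^{2n×2n} be the Jacobian of the network of bistable oscillators at the origin, i.e., the block matrix whose k-th 2×2 diagonal block is M = [[σ, −ω], [ω, σ]] and whose off-diagonal (k, ℓ) blocks (k ≠ ℓ) are (C/n)·I₂. Then the vector w ∈ ℂ^{2n} defined by w_{2k−1} = 1 and w_{2k} = i for k = 1, …, n satisfies A·w = (σ + C(n−1)/n − iω)·w; in particular, σ + C(n−1)/n + iω and its conjugate are eigenvalues of A, and if C(n−1)/n > −σ then A has an eigenvalue with positive real part (so the equilibrium z = 0 of the network is linearly unstable). -/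
/-!
On vectors that repeat one `u ∈ ℂ²` at every node, `A` acts as the 2×2 matrix
`M + (n - 1)(C/n) I₂`. The rotation-scaling block `M = [[σ, -ω], [ω, σ]]` has eigenvectors
`(1, ±i)` with eigenvalues `σ ∓ iω`, so `(1, ±i)` repeated is an eigenvector of `A` with
eigenvalue `σ + C(n-1)/n ∓ iω`, whose real part is `σ + C(n-1)/n`.
-/

open Matrix

theorem Matrix.mem_spectrum_of_mulVec_eq_smul {R n : Type*} [CommRing R] [Fintype n]
    [DecidableEq n] {A : Matrix n n R} {μ : R} {v : n → R} (hv : v ≠ 0)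
    (h : A *ᵥ v = μ • v) : μ ∈ spectrum R A := by
  rw [← spectrum_toLin']
  exact Module.End.HasEigenvalue.mem_spectrum <| Module.End.hasEigenvalue_of_hasEigenvector
    ⟨Module.End.mem_eigenspace_iff.mpr <| by rwa [toLin'_apply], hv⟩

section Blocks

variable {ι κ R : Type*} [Fintype ι] [DecidableEq ι] [Fintype κ] [CommRing R]
  {A : Matrix (ι × κ) (ι × κ) R} {M B : Matrix κ κ R}

theorem Matrix.mulVec_comp_snd_of_blocks (hdiag : ∀ k i j, A (k, i) (k, j) = M i j)
    (hoff : ∀ k ℓ, k ≠ ℓ → ∀ i j, A (k, i) (ℓ, j) = B i j) (u : κ → R) :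
    A *ᵥ (u ∘ Prod.snd) = (M *ᵥ u + ((Fintype.card ι : R) - 1) • B *ᵥ u) ∘ Prod.snd := by
  ext ⟨k, i⟩
  have hrow : ∀ ℓ, ∑ j, A (k, i) (ℓ, j) * u j =
      (B *ᵥ u) i + if ℓ = k then (M *ᵥ u) i - (B *ᵥ u) i else 0 := by
    intro ℓ
    rcases eq_or_ne ℓ k with rfl | h
    · simp [mulVec, dotProduct, hdiag]
    · simp [mulVec, dotProduct, hoff k ℓ h.symm, h]
  calc (A *ᵥ (u ∘ Prod.snd)) (k, i) = ∑ ℓ, ∑ j, A (k, i) (ℓ, j) * u j := by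
        simp [mulVec, dotProduct, Fintype.sum_prod_type]
    _ = _ := by
        simp only [hrow, Finset.sum_add_distrib, Finset.sum_ite_eq', Finset.mem_univ, if_true,
          Finset.sum_const, Finset.card_univ, nsmul_eq_mul, Function.comp_apply, Pi.add_apply,
          Pi.smul_apply, smul_eq_mul]
        ring

theorem Matrix.mulVec_comp_snd_eq_smul_of_blocks (hdiag : ∀ k i j, A (k, i) (k, j) = M i j)
    (hoff : ∀ k ℓ, k ≠ ℓ → ∀ i j, A (k, i) (ℓ, j) = B i j) {u : κ → R} {μ β : R}
    (hM : M *ᵥ u = μ • u) (hB : B *ᵥ u = β • u) :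
    A *ᵥ (u ∘ Prod.snd) = (μ + ((Fintype.card ι : R) - 1) * β) • (u ∘ Prod.snd) := by
  rw [mulVec_comp_snd_of_blocks hdiag hoff, hM, hB, smul_smul, ← add_smul, mul_comm]
  rfl

end Blocks

theorem Matrix.mulVec_rotScale_eq_smul_of_sq_eq_neg_one {R : Type*} [CommRing R] {a b s : R}
    (hs : s ^ 2 = -1) :
    !![a, -b; b, a] *ᵥ ![1, s] = (a - s * b) • ![1, s] := by
  ext i
  fin_cases i
  · simp
    ring
  · simp
    linear_combination b * hs

/-- the Jacobian of the network at the origin has w = (1, i, 1, i, …)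
as an eigenvector with eigenvalue σ + C(n-1)/n - iω; hence σ + C(n-1)/n ± iω are
eigenvalues, and when C(n-1)/n > -σ the origin is linearly unstable. -/
theorem stmt_17 (ω σ C : ℝ) (n : ℕ) (hn : 2 ≤ n)
    (A : Matrix (Fin n × Fin 2) (Fin n × Fin 2) ℂ)
    (hAd : ∀ k : Fin n, A (k, 0) (k, 0) = (σ : ℂ) ∧ A (k, 0) (k, 1) = -(ω : ℂ) ∧
      A (k, 1) (k, 0) = (ω : ℂ) ∧ A (k, 1) (k, 1) = (σ : ℂ))
    (hAo : ∀ k ℓ : Fin n, k ≠ ℓ → ∀ i j : Fin 2,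
      A (k, i) (ℓ, j) = if i = j then (C : ℂ) / (n : ℂ) else 0)
    (w : Fin n × Fin 2 → ℂ)
    (hw : ∀ k : Fin n, w (k, 0) = 1 ∧ w (k, 1) = Complex.I) :
    A.mulVec w = ((σ : ℂ) + (C : ℂ) * ((n : ℂ) - 1) / (n : ℂ) - Complex.I * (ω : ℂ)) • w ∧
    ((σ : ℂ) + (C : ℂ) * ((n : ℂ) - 1) / (n : ℂ) + Complex.I * (ω : ℂ)) ∈ spectrum ℂ A ∧
    ((σ : ℂ) + (C : ℂ) * ((n : ℂ) - 1) / (n : ℂ) - Complex.I * (ω : ℂ)) ∈ spectrum ℂ A ∧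
    (C * ((n : ℝ) - 1) / (n : ℝ) > -σ → ∃ μ ∈ spectrum ℂ A, 0 < μ.re) := by
  have hdiag : ∀ k i j, A (k, i) (k, j) = !![(σ : ℂ), -ω; ω, σ] i j := by
    intro k i j
    fin_cases i <;> fin_cases j <;> simp [hAd k]
  have hoff : ∀ k ℓ, k ≠ ℓ → ∀ i j,
      A (k, i) (ℓ, j) = (((C : ℂ) / n) • 1 : Matrix (Fin 2) (Fin 2) ℂ) i j := by
    intro k ℓ h i j
    simp [hAo k ℓ h, one_apply]
  have heig : ∀ s : ℂ, s ^ 2 = -1 → A *ᵥ (![1, s] ∘ Prod.snd) =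
      ((σ : ℂ) + C * ((n : ℂ) - 1) / n - s * ω) • (![1, s] ∘ Prod.snd) := by
    intro s hs
    rw [mulVec_comp_snd_eq_smul_of_blocks hdiag hoff
      (mulVec_rotScale_eq_smul_of_sq_eq_neg_one hs) (by rw [smul_mulVec, one_mulVec]),
      Fintype.card_fin]
    congr 1
    ring
  have hne : ∀ s : ℂ, (![1, s] ∘ Prod.snd : Fin n × Fin 2 → ℂ) ≠ 0 := fun s h => by
    simpa using congrFun h (⟨0, by omega⟩, 0)
  have hw_eq : w = ![1, Complex.I] ∘ Prod.snd := by
    ext ⟨k, i⟩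
    fin_cases i <;> simp [hw k]
  have hplus := mem_spectrum_of_mulVec_eq_smul (hne _) (heig (-Complex.I) (by simp))
  rw [neg_mul, sub_neg_eq_add] at hplus
  subst hw_eq
  refine ⟨heig _ Complex.I_sq, hplus,
    mem_spectrum_of_mulVec_eq_smul (hne _) (heig _ Complex.I_sq), fun hpos => ⟨_, hplus, ?_⟩⟩
  have hre : ((σ : ℂ) + C * ((n : ℂ) - 1) / n + Complex.I * ω).re =
      σ + C * ((n : ℝ) - 1) / n := by
    simp
  linarith
end
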